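/- Let {E_{α,k} : k=1,…,M}, α=1,…,N, be an informationally complete (N,M)-POVM on ℂ^d with efficiency parameter x, and set w = d/M, y = (d − Mx)/(M(M−1)), z = d/M², and F_{α,k} = (1/(x−y))·(E_{α,k} − (((N−1)z + y)/(Nw))·I_d). Then every density matrix ρ on ℂ^d satisfies ρ = Σ_{α=1}^{N} Σ_{k=1}^{M} tr(E_{α,k} ρ)·F_{α,k}. -/

import Mathlib

open scoped BigOperators ComplexOrder
open Matrix

noncomputable def traceNorm {m n : Type*} [Fintype m] [Fintype n] [DecidableEq n]
    (X : Matrix m n ℂ) : ℝ :=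
  ((Matrix.posSemidef_conjTranspose_mul_self X).1.eigenvectorUnitary.1 *
    diagonal (((↑) : ℝ → ℂ) ∘ (Real.sqrt ·) ∘ (Matrix.posSemidef_conjTranspose_mul_self X).1.eigenvalues) *
    (star (Matrix.posSemidef_conjTranspose_mul_self X).1.eigenvectorUnitary : Matrix n n ℂ)).trace.re

def IsDensityMatrix {ι : Type*} [Fintype ι] (ρ : Matrix ι ι ℂ) : Prop :=
  ρ.PosSemidef ∧ ρ.trace = 1

def IsNMPOVM (d N M : ℕ) (x : ℝ)
    (E : Fin N → Fin M → Matrix (Fin d) (Fin d) ℂ) : Prop :=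
  (∀ α k, (E α k).PosSemidef) ∧
  (∀ α, ∑ k, E α k = 1) ∧
  (∀ α k, (E α k).trace = (((d : ℝ) / M : ℝ) : ℂ)) ∧
  (∀ α k, (E α k * E α k).trace = (x : ℂ)) ∧
  (∀ α k l, k ≠ l → (E α k * E α l).trace =
      ((((d : ℝ) - M * x) / (M * ((M : ℝ) - 1)) : ℝ) : ℂ)) ∧
  (∀ α β k l, α ≠ β → (E α k * E β l).trace = (((d : ℝ) / M ^ 2 : ℝ) : ℂ)) ∧
  ((d : ℝ) / M ^ 2 < x ∧ x ≤ min ((d : ℝ) ^ 2 / M ^ 2) ((d : ℝ) / M))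

def IsInfoComplete (d N M : ℕ) : Prop := ((M : ℝ) - 1) * N = (d : ℝ) ^ 2 - 1

/-!
The reconstruction map `R A = ∑ α k, tr (E α k * A) • F α k` fixes every `E β l`: the Gram
relations of the POVM give
`∑ α k, tr (E α k * E β l) • E α k = (x - y) • E β l + (y + (N - 1) * z) • 1`,
and the multiple of `1` subtracted in `F α k` cancels the identity term. As `1 = ∑ k, E α k`,
every `F α k` lies in the span of the `E α k`, so `R` is idempotent. Its trace
`∑ α k, tr (E α k * F α k)` equals `d ^ 2` by informational completeness, and an idempotent
whose trace is the dimension is the identity. This trace count replaces any proof that the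
`E α k` span the matrix space.
-/

theorem Module.End.eq_one_of_trace_eq_finrank {K V : Type*} [Field K] [CharZero K]
    [AddCommGroup V] [Module K V] [FiniteDimensional K V] {f : Module.End K V} {s : Set V}
    (hfix : ∀ v ∈ s, f v = v) (hrange : LinearMap.range f ≤ Submodule.span K s)
    (htr : LinearMap.trace K V f = Module.finrank K V) : f = 1 := by
  have hidem : IsIdempotentElem f := LinearMap.ext fun v =>
    LinearMap.eqOn_span (g := LinearMap.id) hfix (hrange ⟨v, rfl⟩)
  have hzero : LinearMap.trace K V (1 - f) = 0 := by
    rw [map_sub, LinearMap.trace_one, htr, sub_self]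
  exact (sub_eq_zero.mp
    (LinearMap.IsIdempotentElem.eq_zero_of_trace_eq_zero hidem.one_sub hzero)).symm

section Reconstruction

variable {ι κ n K : Type*} [Fintype ι] [Fintype κ] [Fintype n] [CommRing K]

noncomputable def povmReconstruction (E F : ι → κ → Matrix n n K) :
    Module.End K (Matrix n n K) :=
  ∑ α, ∑ k, (traceLinearMap n K K ∘ₗ LinearMap.mulLeft K (E α k)).smulRight (F α k)

theorem povmReconstruction_apply (E F : ι → κ → Matrix n n K) (A : Matrix n n K) :
    povmReconstruction E F A = ∑ α, ∑ k, (E α k * A).trace • F α k := by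
  simp [povmReconstruction, LinearMap.sum_apply]

theorem trace_povmReconstruction (E F : ι → κ → Matrix n n K) :
    LinearMap.trace K _ (povmReconstruction E F) = ∑ α, ∑ k, (E α k * F α k).trace := by
  simp [povmReconstruction, map_sum]

theorem range_povmReconstruction_le {E F : ι → κ → Matrix n n K}
    {p : Submodule K (Matrix n n K)} (hF : ∀ α k, F α k ∈ p) :
    LinearMap.range (povmReconstruction E F) ≤ p := by
  rintro _ ⟨A, rfl⟩
  rw [povmReconstruction_apply]
  exact p.sum_mem fun α _ => p.sum_mem fun k _ => p.smul_mem _ (hF α k)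

end Reconstruction

section EfficiencyBounds

variable {d M : ℕ} {x : ℝ}

theorem one_lt_of_div_sq_lt_of_le_div (hlow : (d : ℝ) / M ^ 2 < x) (hup : x ≤ (d : ℝ) / M) :
    1 < M := by
  by_contra! hM
  interval_cases M <;> simp at hlow hup <;> linarith

theorem one_lt_of_div_sq_lt_of_le_sq_div (hlow : (d : ℝ) / M ^ 2 < x)
    (hup : x ≤ (d : ℝ) ^ 2 / M ^ 2) : 1 < d := by
  have hdd : (d : ℝ) < d ^ 2 := by
    by_contra! h
    exact (hlow.trans_le hup).not_ge (div_le_div_of_nonneg_right h (by positivity))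
  have hd : (1 : ℝ) < d := by nlinarith [(d.cast_nonneg : (0 : ℝ) ≤ d)]
  exact_mod_cast hd

theorem div_sub_mul_lt (hM : 1 < M) (hlow : (d : ℝ) / M ^ 2 < x) :
    ((d : ℝ) - M * x) / (M * ((M : ℝ) - 1)) < x := by
  have hM' : (1 : ℝ) < M := by exact_mod_cast hM
  rw [div_lt_iff₀ (by positivity)] at hlow ⊢
  nlinarith

end EfficiencyBounds

theorem IsInfoComplete.mul_sub_eq_sq_mul_sub {d N M : ℕ} (hIC : IsInfoComplete d N M) (hM : 1 < M)
    {x y z : ℝ} (hy : y = ((d : ℝ) - M * x) / (M * ((M : ℝ) - 1)))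
    (hz : z = (d : ℝ) / M ^ 2) :
    M * (N * x - ((N - 1) * z + y)) = d ^ 2 * (x - y) := by
  have hM' : (1 : ℝ) < M := by exact_mod_cast hM
  have hy' : y * (M * (M - 1)) = d - M * x := by
    rw [hy, div_mul_cancel₀ _ (by nlinarith)]
  have hz' : z * M ^ 2 = d := by rw [hz, div_mul_cancel₀ _ (by positivity)]
  refine mul_left_cancel₀ (by positivity : (M : ℝ) ≠ 0) ?_
  rw [IsInfoComplete] at hIC
  linear_combination ((N : ℝ) - 1) * (hy' - hz') + M * (x - y) * hIC

theorem IsInfoComplete.ne_zero {d N M : ℕ} (hIC : IsInfoComplete d N M) (hd : 1 < d) :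
    N ≠ 0 := by
  rintro rfl
  have hd' : (1 : ℝ) < d := by exact_mod_cast hd
  simp only [IsInfoComplete, Nat.cast_zero, mul_zero] at hIC
  nlinarith

section DualFrame

variable {ι κ n K : Type*} [Fintype ι] [Fintype κ] [Fintype n] [DecidableEq n] [Field K]
  {E : ι → κ → Matrix n n K} {x y z w c : K}

theorem sum_sum_trace_mul (hsum : ∀ α, ∑ k, E α k = 1) (A : Matrix n n K) :
    ∑ α, ∑ k, (E α k * A).trace = Fintype.card ι * A.trace := by
  simp [← trace_sum, ← Finset.sum_mul, hsum]

theorem sum_sum_trace_mul_smul (hsum : ∀ α, ∑ k, E α k = 1)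
    (hdiag : ∀ α k, (E α k * E α k).trace = x)
    (hoff : ∀ α k l, k ≠ l → (E α k * E α l).trace = y)
    (hcross : ∀ α β k l, α ≠ β → (E α k * E β l).trace = z) (β : ι) (l : κ) :
    ∑ α, ∑ k, (E α k * E β l).trace • E α k =
      (x - y) • E β l + (y + (Fintype.card ι - 1) * z) • 1 := by
  classical
  have hrow : ∀ α, ∑ k, (E α k * E β l).trace • E α k =
      z • 1 + if α = β then (x - y) • E β l + (y - z) • 1 else 0 := by
    intro α
    by_cases hαβ : α = β
    · subst hαβ
      have hentry : ∀ k, (E α k * E α l).trace • E α k =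
          y • E α k + if k = l then (x - y) • E α l else 0 := by
        intro k
        by_cases hkl : k = l
        · subst hkl; rw [hdiag, if_pos rfl]; module
        · rw [hoff α k l hkl, if_neg hkl, add_zero]
      rw [Finset.sum_congr rfl fun k _ => hentry k, Finset.sum_add_distrib, ← Finset.smul_sum,
        hsum, Finset.sum_ite_eq', if_pos (Finset.mem_univ l), if_pos rfl]
      module
    · rw [if_neg hαβ, add_zero, ← hsum α, Finset.smul_sum]
      exact Finset.sum_congr rfl fun k _ => by rw [hcross α β k l hαβ]
  rw [Finset.sum_congr rfl fun α _ => hrow α, Finset.sum_add_distrib, Finset.sum_ite_eq',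
    if_pos (Finset.mem_univ β), Finset.sum_const, Finset.card_univ, ← Nat.cast_smul_eq_nsmul K]
  module

def povmDualFrame (E : ι → κ → Matrix n n K) (x y c : K) : ι → κ → Matrix n n K :=
  fun α k => (1 / (x - y)) • (E α k - c • 1)

theorem povmReconstruction_dualFrame_apply_self (hsum : ∀ α, ∑ k, E α k = 1)
    (htr : ∀ α k, (E α k).trace = w)
    (hdiag : ∀ α k, (E α k * E α k).trace = x)
    (hoff : ∀ α k l, k ≠ l → (E α k * E α l).trace = y)
    (hcross : ∀ α β k l, α ≠ β → (E α k * E β l).trace = z)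
    (hxy : x - y ≠ 0) (hc : Fintype.card ι * w * c = y + (Fintype.card ι - 1) * z)
    (β : ι) (l : κ) :
    povmReconstruction E (povmDualFrame E x y c) (E β l) = E β l := by
  rw [povmReconstruction_apply]
  calc ∑ α, ∑ k, (E α k * E β l).trace • (1 / (x - y)) • (E α k - c • 1)
      = (1 / (x - y)) • (∑ α, ∑ k, (E α k * E β l).trace • E α k
          - ((∑ α, ∑ k, (E α k * E β l).trace) * c) • 1) := by
        simp only [Finset.sum_mul, Finset.sum_smul, smul_sub, Finset.smul_sum,
          Finset.sum_sub_distrib, smul_smul]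
        congr 1 <;> exact Finset.sum_congr rfl fun _ _ => Finset.sum_congr rfl fun _ _ => by
          ring_nf
    _ = (1 / (x - y)) • ((x - y) • E β l + (y + (Fintype.card ι - 1) * z) • 1
          - (Fintype.card ι * w * c) • 1) := by
        rw [sum_sum_trace_mul_smul hsum hdiag hoff hcross, sum_sum_trace_mul hsum, htr]
    _ = E β l := by
        rw [hc, add_sub_cancel_right, smul_smul, one_div, inv_mul_cancel₀ hxy, one_smul]

theorem range_povmReconstruction_dualFrame_le (hsum : ∀ α, ∑ k, E α k = 1) :
    LinearMap.range (povmReconstruction E (povmDualFrame E x y c)) ≤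
      Submodule.span K (Set.range (Function.uncurry E)) := by
  have hE : ∀ α k, E α k ∈ Submodule.span K (Set.range (Function.uncurry E)) :=
    fun α k => Submodule.subset_span ⟨(α, k), rfl⟩
  refine range_povmReconstruction_le fun α k => Submodule.smul_mem _ _ (sub_mem (hE α k) ?_)
  rw [← hsum α]
  exact Submodule.smul_mem _ _ (Submodule.sum_mem _ fun j _ => hE α j)

theorem trace_povmReconstruction_dualFrame (htr : ∀ α k, (E α k).trace = w)
    (hdiag : ∀ α k, (E α k * E α k).trace = x) :
    LinearMap.trace K _ (povmReconstruction E (povmDualFrame E x y c)) =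
      Fintype.card ι * Fintype.card κ * ((x - c * w) / (x - y)) := by
  simp [trace_povmReconstruction, povmDualFrame, mul_sub, hdiag, htr, div_eq_inv_mul, mul_assoc]

end DualFrame

theorem state_reconstruction_general (d N M : ℕ) (x w y z : ℝ)
    (E : Fin N → Fin M → Matrix (Fin d) (Fin d) ℂ)
    (hE : IsNMPOVM d N M x E) (hIC : IsInfoComplete d N M)
    (hw : w = (d : ℝ) / M) (hy : y = ((d : ℝ) - M * x) / (M * ((M : ℝ) - 1)))
    (hz : z = (d : ℝ) / M ^ 2)
    (ρ : Matrix (Fin d) (Fin d) ℂ) :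
    ρ = ∑ α, ∑ k, (E α k * ρ).trace •
      ((1 / ((x : ℂ) - (y : ℂ))) •
        (E α k - ((((N : ℂ) - 1) * (z : ℂ) + (y : ℂ)) / ((N : ℂ) * (w : ℂ))) •
          (1 : Matrix (Fin d) (Fin d) ℂ))) := by
  obtain ⟨-, hsum, htr, hdiag, hoff, hcross, hlow, hup⟩ := hE
  have hM := one_lt_of_div_sq_lt_of_le_div hlow (hup.trans (min_le_right _ _))
  have hd := one_lt_of_div_sq_lt_of_le_sq_div hlow (hup.trans (min_le_left _ _))
  have hyx : y < x := hy ▸ div_sub_mul_lt hM hlow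
  have hN := hIC.ne_zero hd
  rw [← hw] at htr
  rw [← hy] at hoff
  rw [← hz] at hcross
  set c : ℂ := (((N : ℂ) - 1) * (z : ℂ) + (y : ℂ)) / ((N : ℂ) * (w : ℂ))
  have hxy : (x : ℂ) - y ≠ 0 := by exact_mod_cast (sub_pos.mpr hyx).ne'
  have hc : (N : ℂ) * w * c = y + (N - 1) * z := by
    have hw0 : (w : ℂ) ≠ 0 := by
      rw [hw]; push_cast; exact div_ne_zero (by positivity) (by positivity)
    rw [mul_div_cancel₀ _ (mul_ne_zero (by exact_mod_cast hN) hw0)]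
    ring
  have hkey : (M : ℂ) * (N * x - ((N - 1) * z + y)) = d ^ 2 * (x - y) := by
    exact_mod_cast congrArg Complex.ofReal (hIC.mul_sub_eq_sq_mul_sub hM hy hz)
  have hR : povmReconstruction E (povmDualFrame E x y c) = 1 := by
    refine Module.End.eq_one_of_trace_eq_finrank (s := Set.range (Function.uncurry E))
      ?_ (range_povmReconstruction_dualFrame_le hsum) ?_
    · rintro _ ⟨⟨β, l⟩, rfl⟩
      exact povmReconstruction_dualFrame_apply_self hsum htr hdiag hoff hcross hxy
        (by rwa [Fintype.card_fin]) β l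
    · rw [trace_povmReconstruction_dualFrame htr hdiag, Module.finrank_matrix,
        Module.finrank_self, ← mul_div_assoc, div_eq_iff hxy]
      simp only [Fintype.card_fin]
      push_cast
      linear_combination hkey - M * hc
  simpa [povmReconstruction_apply, povmDualFrame] using (congrArg (· ρ) hR).symm

/-- With w = d/M, y = (d − Mx)/(M(M−1)), z = d/M² and
F_{α,k} = (1/(x−y))·(E_{α,k} − (((N−1)z + y)/(Nw))·I_d), every density matrix ρ
satisfies ρ = Σ_{α,k} tr(E_{α,k} ρ)·F_{α,k}. -/
theorem state_reconstruction (d N M : ℕ) (x w y z : ℝ)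
    (E : Fin N → Fin M → Matrix (Fin d) (Fin d) ℂ)
    (hE : IsNMPOVM d N M x E) (hIC : IsInfoComplete d N M)
    (hw : w = (d : ℝ) / M) (hy : y = ((d : ℝ) - M * x) / (M * ((M : ℝ) - 1)))
    (hz : z = (d : ℝ) / M ^ 2)
    (ρ : Matrix (Fin d) (Fin d) ℂ) (hρ : IsDensityMatrix ρ) :
    ρ = ∑ α, ∑ k, (E α k * ρ).trace •
      ((1 / ((x : ℂ) - (y : ℂ))) •
        (E α k - ((((N : ℂ) - 1) * (z : ℂ) + (y : ℂ)) / ((N : ℂ) * (w : ℂ))) •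
          (1 : Matrix (Fin d) (Fin d) ℂ))) :=
  state_reconstruction_general d N M x w y z E hE hIC hw hy hz ρ
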